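/- arXiv:2604.13395 — 2 statements merged into one kernel-verified Lean document; each statement's English description precedes it below -/
import Mathlib

section
/- Split conformal coverage: Let s_1, …, s_n, s_{n+1} be exchangeable real-valued random variables (nonconformity scores). Define q̂ as the ⌈(1−α)(n+1)⌉-th smallest value among s_1,…,s_n (equivalently the (1−α)-quantile of the multiset {s_1,…,s_n} ∪ {∞}). Then Pr(s_{n+1} ≤ q̂) ≥ 1 − α. -/
/-!
Write `r_j` for the number of scores strictly below `s_j`. The event `s_{n+1} ≤ q̂` is exactly
`r_{n+1} < k` with `k = ⌈(1-α)(n+1)⌉`. For every realisation at least `k` indices `j` satisfy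
`r_j < k` (the `m`-th smallest score has `r ≤ m`), and by exchangeability all `n+1` events
`r_j < k` have the same probability, so each has probability at least `k/(n+1) ≥ 1-α`.
-/

open MeasureTheory ProbabilityTheory Finset

/-- The `⌈(1−α)(n+1)⌉`-th smallest value of the scores `xs` (equivalently, the
`(1−α)`-quantile of the multiset `{xs} ∪ {∞}`, where exceeding the sample size gives
`∞`, represented in `EReal`). -/
noncomputable def conformalQuantile (n : ℕ) (α : ℝ) (xs : Fin n → ℝ) : EReal :=
  (((Multiset.ofList (List.ofFn xs)).sort (· ≤ ·)).map (fun x : ℝ => (x : EReal))).getD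
    (⌈(1 - α) * (n + 1 : ℝ)⌉.toNat - 1) ⊤

open scoped ENNReal

section Rank

variable {ι α : Type*} [Fintype ι] [LinearOrder α]

def strictRank (x : ι → α) (j : ι) : ℕ := #{i | x i < x j}

lemma strictRank_comp_perm (x : ι → α) (σ : Equiv.Perm ι) (j : ι) :
    strictRank (x ∘ σ) j = strictRank x (σ j) :=
  card_equiv σ (by simp)

lemma strictRank_last {n : ℕ} (x : Fin (n + 1) → α) :
    strictRank x (Fin.last n) = #{i : Fin n | x i.castSucc < x (Fin.last n)} := by
  rw [strictRank, card_filter, card_filter, Fin.sum_univ_castSucc]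
  simp

/-- The `m`-th smallest entry has strict rank at most `m`. -/
lemma le_card_strictRank_lt {N k : ℕ} (x : Fin N → α) (hk : k ≤ N) :
    k ≤ #{j | strictRank x j < k} := by
  have hrank (m : Fin N) : strictRank x (Tuple.sort x m) ≤ m := by
    rw [← strictRank_comp_perm]
    exact not_lt.mp fun h => lt_irrefl _
      ((Tuple.lt_card_lt_iff_apply_lt_of_monotone (Tuple.monotone_sort x)).mp h)
  calc k = #{m : Fin N | (m : ℕ) < k} := by rw [Fin.card_filter_val_lt, min_eq_right hk]
    _ ≤ #{j | strictRank x j < k} :=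
      card_le_card_of_injOn (Tuple.sort x)
        (fun m hm => by simpa using (hrank m).trans_lt (by simpa using hm))
        (Tuple.sort x).injective.injOn

end Rank

lemma lintegral_card_filter {Ω ι : Type*} [MeasurableSpace Ω] [Fintype ι] {μ : Measure Ω}
    (p : ι → Ω → Prop) [∀ ω, DecidablePred (p · ω)] (hp : ∀ i, MeasurableSet {ω | p i ω}) :
    ∫⁻ ω, (#{i | p i ω} : ℝ≥0∞) ∂μ = ∑ i, μ {ω | p i ω} := by
  have hcard (ω : Ω) : (#{i | p i ω} : ℝ≥0∞) = ∑ i, {ω | p i ω}.indicator 1 ω := by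
    rw [card_filter]
    simp [Set.indicator_apply]
  simp_rw [hcard]
  rw [lintegral_finsetSum _ fun i _ => measurable_one.indicator (hp i)]
  simp [lintegral_indicator_one (hp _)]

section Exchangeable

variable {ι α : Type*} [MeasurableSpace α]

def IsExchangeable (ν : Measure (ι → α)) : Prop :=
  ∀ σ : Equiv.Perm ι, ν.map (fun x => x ∘ σ) = ν

lemma measurable_comp_perm (σ : Equiv.Perm ι) : Measurable fun x : ι → α => x ∘ σ :=
  measurable_pi_lambda _ fun i => measurable_pi_apply (σ i)

lemma IsExchangeable.measure_preimage_comp_perm {ν : Measure (ι → α)} (hν : IsExchangeable ν)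
    (σ : Equiv.Perm ι) {B : Set (ι → α)} (hB : MeasurableSet B) :
    ν ((fun x => x ∘ σ) ⁻¹' B) = ν B := by
  rw [← Measure.map_apply (measurable_comp_perm σ) hB, hν σ]

variable [Fintype ι] [LinearOrder α] [TopologicalSpace α] [OpensMeasurableSpace α]
  [OrderClosedTopology α] [SecondCountableTopology α]

lemma measurable_strictRank (j : ι) : Measurable fun x : ι → α => strictRank x j := by
  simp only [strictRank, Finset.card_filter]
  exact Finset.measurable_sum _ fun i _ =>
    Measurable.ite
      (measurableSet_lt (measurable_pi_apply (X := fun _ : ι => α) i) (measurable_pi_apply j))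
      measurable_const measurable_const

lemma measurableSet_strictRank_lt (j : ι) (k : ℕ) :
    MeasurableSet {x : ι → α | strictRank x j < k} :=
  measurable_strictRank j measurableSet_Iio

lemma IsExchangeable.measure_strictRank_lt_eq [DecidableEq ι] {ν : Measure (ι → α)}
    (hν : IsExchangeable ν) (k : ℕ) (j j' : ι) :
    ν {x | strictRank x j < k} = ν {x | strictRank x j' < k} := by
  have hswap : {x : ι → α | strictRank x j < k} =
      (fun x => x ∘ Equiv.swap j j') ⁻¹' {x | strictRank x j' < k} := by
    ext x
    simp [strictRank_comp_perm]
  rw [hswap, hν.measure_preimage_comp_perm _ (measurableSet_strictRank_lt j' k)]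

/-- At least `k` of the `N` equiprobable events `strictRank x j < k` occur for every `x`. -/
lemma IsExchangeable.le_mul_measure_strictRank_lt {N : ℕ} {ν : Measure (Fin N → α)}
    [IsProbabilityMeasure ν] (hν : IsExchangeable ν) {k : ℕ} (hk : k ≤ N) (j : Fin N) :
    (k : ℝ≥0∞) ≤ N * ν {x | strictRank x j < k} :=
  calc (k : ℝ≥0∞) = ∫⁻ _, (k : ℝ≥0∞) ∂ν := by simp
    _ ≤ ∫⁻ x, (#{j | strictRank x j < k} : ℝ≥0∞) ∂ν :=
      lintegral_mono fun x => Nat.cast_le.mpr (le_card_strictRank_lt x hk)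
    _ = ∑ j', ν {x | strictRank x j' < k} :=
      lintegral_card_filter (fun j x => strictRank x j < k) (measurableSet_strictRank_lt · k)
    _ = N * ν {x | strictRank x j < k} := by
      simp [hν.measure_strictRank_lt_eq k _ j]

end Exchangeable

lemma Multiset.sort_ofFn {α : Type*} [LinearOrder α] {n : ℕ} (xs : Fin n → α) :
    (Multiset.ofList (List.ofFn xs)).sort (· ≤ ·) = List.ofFn (xs ∘ Tuple.sort xs) :=
  List.Perm.eq_of_pairwise' (r := (· ≤ ·))
    (Multiset.pairwise_sort _ _) (Tuple.monotone_sort xs).sortedLE_ofFn.pairwise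
    ((Multiset.coe_eq_coe.mp (Multiset.sort_eq _ _)).trans
      ((Tuple.sort xs).ofFn_comp_perm xs).symm)

noncomputable def conformalRank (n : ℕ) (α : ℝ) : ℕ := ⌈(1 - α) * (n + 1 : ℝ)⌉.toNat

section ConformalRank

variable (n : ℕ) {α : ℝ}

lemma one_le_conformalRank (hα : α < 1) : 1 ≤ conformalRank n α := by
  have : 0 < ⌈(1 - α) * (n + 1 : ℝ)⌉ := Int.ceil_pos.mpr (by nlinarith)
  rw [conformalRank]
  omega

lemma conformalRank_le (hα : 0 ≤ α) : conformalRank n α ≤ n + 1 := by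
  have : ⌈(1 - α) * (n + 1 : ℝ)⌉ ≤ (n + 1 : ℤ) := Int.ceil_le.mpr (by push_cast; nlinarith)
  rw [conformalRank]
  omega

lemma ofReal_one_sub_le_conformalRank_div :
    ENNReal.ofReal (1 - α) ≤ (conformalRank n α : ℝ≥0∞) / (n + 1 : ℕ) := by
  have hrank : (1 - α) * (n + 1 : ℝ) ≤ conformalRank n α := by
    calc (1 - α) * (n + 1 : ℝ) ≤ ⌈(1 - α) * (n + 1 : ℝ)⌉ := Int.le_ceil _
      _ ≤ conformalRank n α := by
        rw [conformalRank]
        exact_mod_cast Int.self_le_toNat _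
  rw [← ENNReal.ofReal_natCast, ← ENNReal.ofReal_natCast,
    ← ENNReal.ofReal_div_of_pos (by positivity)]
  exact ENNReal.ofReal_le_ofReal ((le_div_iff₀ (by positivity)).mpr (by push_cast; exact hrank))

/-- Past the end of the sorted list, `conformalQuantile` is `⊤` (the paper's `∞`), and both sides
hold trivially. -/
lemma coe_le_conformalQuantile_iff (hα : α < 1) (xs : Fin n → ℝ) (y : ℝ) :
    (y : EReal) ≤ conformalQuantile n α xs ↔ #{i | xs i < y} < conformalRank n α := by
  have hk := one_le_conformalRank n hα
  have hcard : #{i | (xs ∘ Tuple.sort xs) i < y} = #{i | xs i < y} :=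
    card_equiv (Tuple.sort xs) (by simp)
  change _ ≤ List.getD _ (conformalRank n α - 1) ⊤ ↔ _
  rw [Multiset.sort_ofFn]
  by_cases hkn : conformalRank n α - 1 < n
  · rw [List.getD_eq_getElem _ _ (by simpa using hkn), List.getElem_map, List.getElem_ofFn,
      EReal.coe_le_coe_iff, ← not_lt,
      ← Tuple.lt_card_lt_iff_apply_lt_of_monotone (Tuple.monotone_sort xs), hcard, Fin.val_mk]
    omega
  · rw [List.getD_eq_default _ _ (by simpa using hkn)]
    have : #{i | xs i < y} ≤ n := by simpa using card_filter_le univ fun i => xs i < y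
    simp only [le_top, true_iff]
    omega

end ConformalRank

theorem split_conformal_coverage_general
    {Ω : Type*} [MeasureSpace Ω] [IsProbabilityMeasure (ℙ : Measure Ω)]
    (n : ℕ) (α : ℝ) (hα : α ∈ Set.Ioo (0 : ℝ) 1)
    (s : Fin (n + 1) → Ω → ℝ) (hmeas : ∀ i, Measurable (s i))
    (hexch : ∀ σ : Equiv.Perm (Fin (n + 1)),
      Measure.map (fun ω i => s (σ i) ω) ℙ = Measure.map (fun ω i => s i ω) ℙ) :
    ENNReal.ofReal (1 - α) ≤
      ℙ {ω | (s (Fin.last n) ω : EReal) ≤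
          conformalQuantile n α (fun i => s i.castSucc ω)} := by
  set X : Ω → Fin (n + 1) → ℝ := fun ω i => s i ω
  have hX : Measurable X := measurable_pi_lambda _ hmeas
  have hlaw : IsExchangeable (Measure.map X ℙ) := fun σ => by
    rw [Measure.map_map (measurable_comp_perm σ) hX]
    exact hexch σ
  have hevent : {ω | (s (Fin.last n) ω : EReal) ≤
      conformalQuantile n α (fun i => s i.castSucc ω)} =
      X ⁻¹' {x | strictRank x (Fin.last n) < conformalRank n α} := by
    ext ω
    simp [coe_le_conformalQuantile_iff n hα.2, strictRank_last, X]
  rw [hevent, ← Measure.map_apply hX (measurableSet_strictRank_lt _ _)]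
  have := Measure.isProbabilityMeasure_map (μ := ℙ) hX.aemeasurable
  calc ENNReal.ofReal (1 - α) ≤ (conformalRank n α : ℝ≥0∞) / (n + 1 : ℕ) :=
        ofReal_one_sub_le_conformalRank_div n
    _ ≤ _ := ENNReal.div_le_of_le_mul'
        (hlaw.le_mul_measure_strictRank_lt (conformalRank_le n hα.1.le) _)

/-- Split conformal coverage: for exchangeable scores `s_1, …, s_n, s_{n+1}`, with `q̂`
the `⌈(1−α)(n+1)⌉`-th smallest of the first `n` scores, `Pr(s_{n+1} ≤ q̂) ≥ 1 − α`. -/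
theorem split_conformal_coverage
    {Ω : Type*} [MeasureSpace Ω] [IsProbabilityMeasure (ℙ : Measure Ω)]
    (n : ℕ) (hn : 0 < n) (α : ℝ) (hα : α ∈ Set.Ioo (0 : ℝ) 1)
    (s : Fin (n + 1) → Ω → ℝ) (hmeas : ∀ i, Measurable (s i))
    (hexch : ∀ σ : Equiv.Perm (Fin (n + 1)),
      Measure.map (fun ω i => s (σ i) ω) ℙ = Measure.map (fun ω i => s i ω) ℙ) :
    ENNReal.ofReal (1 - α) ≤
      ℙ {ω | (s (Fin.last n) ω : EReal) ≤
          conformalQuantile n α (fun i => s i.castSucc ω)} :=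
  split_conformal_coverage_general n α hα s hmeas hexch
end

section
/- If scores s_1, …, s_{n+1} are exchangeable and almost surely distinct, then the rank of s_{n+1} among the n+1 scores is uniformly distributed on {1, …, n+1}. -/
/-!
Away from the null set of ties, the ranks `#{i | s_i < s_k}` of the `n + 1` scores are a
permutation of `0, …, n`, so for each `r` the events "`s_k` has rank `r`" partition the sample
space up to a null set. Exchangeability (applied to the transposition of `k` and `n + 1`) gives
all of them the same probability as the event for `s_{n+1}`, which is therefore `1 / (n + 1)`.
-/

open MeasureTheory ProbabilityTheory Finset Function

section rankBelow

variable {ι α : Type*} [Fintype ι] [LinearOrder α]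

/-- The rank of `x k` among the coordinates of `x`, counted from `0`. -/
def rankBelow (x : ι → α) (k : ι) : ℕ := #{i | x i < x k}

lemma rankBelow_lt_card (x : ι → α) (k : ι) : rankBelow x k < Fintype.card ι :=
  card_lt_univ_of_notMem (x := k) (by simp)

lemma rankBelow_lt_rankBelow {x : ι → α} {k k' : ι} (h : x k < x k') :
    rankBelow x k < rankBelow x k' :=
  card_lt_card <| (ssubset_iff_of_subset (monotone_filter_right _ fun _ _ hi => hi.trans h)).2
    ⟨k, by simp [h], by simp⟩

lemma rankBelow_injective {x : ι → α} (hx : Injective x) : Injective (rankBelow x) := by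
  intro k k' h
  by_contra hne
  rcases (hx.ne hne).lt_or_gt with hlt | hlt
  · exact (rankBelow_lt_rankBelow hlt).ne h
  · exact (rankBelow_lt_rankBelow hlt).ne' h

lemma existsUnique_rankBelow_eq {x : ι → α} (hx : Injective x) {m : ℕ}
    (hm : m < Fintype.card ι) : ∃! k, rankBelow x k = m := by
  let rank : ι → Fin (Fintype.card ι) := fun k => ⟨rankBelow x k, rankBelow_lt_card x k⟩
  have hrank : Bijective rank :=
    (Fintype.bijective_iff_injective_and_card rank).2
      ⟨fun k k' h => rankBelow_injective hx (Fin.val_eq_of_eq h), (Fintype.card_fin _).symm⟩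
  simpa [rank, Fin.ext_iff] using hrank.existsUnique ⟨m, hm⟩

lemma rankBelow_comp_perm (x : ι → α) (σ : Equiv.Perm ι) (k : ι) :
    rankBelow (x ∘ σ) k = rankBelow x (σ k) := by
  simp only [rankBelow, card_filter, comp_apply]
  exact Equiv.sum_comp σ fun i => if x i < x (σ k) then 1 else 0

lemma rankBelow_last {n : ℕ} (x : Fin (n + 1) → α) :
    rankBelow x (Fin.last n) = #{i : Fin n | x i.castSucc < x (Fin.last n)} := by
  rw [rankBelow, card_filter, card_filter, Fin.sum_univ_castSucc]
  simp

variable [TopologicalSpace α] [MeasurableSpace α] [OpensMeasurableSpace α]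
  [OrderClosedTopology α] [SecondCountableTopology α]

lemma measurable_rankBelow (k : ι) : Measurable fun x : ι → α => rankBelow x k := by
  simp only [rankBelow, card_filter]
  exact Finset.measurable_sum _ fun i _ => Measurable.ite
    (measurableSet_lt (measurable_pi_apply i) (measurable_pi_apply k)) measurable_const
    measurable_const

end rankBelow

section Exchangeable

variable {Ω ι α : Type*} [MeasurableSpace Ω] {μ : Measure Ω} [Fintype ι]
  [LinearOrder α] [TopologicalSpace α] [MeasurableSpace α] [OpensMeasurableSpace α]
  [OrderClosedTopology α] [SecondCountableTopology α] {X : Ω → ι → α}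

lemma measure_rankBelow_perm_eq (hX : Measurable X) {σ : Equiv.Perm ι}
    (hσ : μ.map (fun ω => X ω ∘ σ) = μ.map X) (k : ι) (m : ℕ) :
    μ {ω | rankBelow (X ω) (σ k) = m} = μ {ω | rankBelow (X ω) k = m} := by
  have hS : MeasurableSet {x : ι → α | rankBelow x k = m} :=
    measurable_rankBelow k (measurableSet_singleton m)
  have hXσ : Measurable fun ω => X ω ∘ σ :=
    measurable_pi_lambda _ fun i => (measurable_pi_apply (σ i)).comp hX
  calc μ {ω | rankBelow (X ω) (σ k) = m}
      = μ.map (fun ω => X ω ∘ σ) {x | rankBelow x k = m} := by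
        rw [Measure.map_apply hXσ hS]
        simp only [Set.preimage_ofPred_eq, rankBelow_comp_perm]
    _ = μ {ω | rankBelow (X ω) k = m} := by rw [hσ, Measure.map_apply hX hS]; rfl

lemma sum_measure_rankBelow_eq_one [IsProbabilityMeasure μ] (hX : Measurable X)
    (hinj : ∀ᵐ ω ∂μ, Injective (X ω)) {m : ℕ} (hm : m < Fintype.card ι) :
    ∑ k, μ {ω | rankBelow (X ω) k = m} = 1 := by
  have hdisj : Pairwise (AEDisjoint μ on fun k => {ω | rankBelow (X ω) k = m}) :=
    fun j k hjk => measure_eq_zero_iff_ae_notMem.2 <| hinj.mono fun ω hω hjk' =>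
      hjk ((existsUnique_rankBelow_eq hω hm).unique hjk'.1 hjk'.2)
  have hcover : (⋃ k, {ω | rankBelow (X ω) k = m}) =ᵐ[μ] Set.univ :=
    ae_eq_univ.2 <| measure_eq_zero_iff_ae_notMem.2 <| hinj.mono fun ω hω hω' =>
      hω' (Set.mem_iUnion.2 (existsUnique_rankBelow_eq hω hm).exists)
  rw [← measure_univ (μ := μ), ← measure_congr hcover, measure_iUnion₀ hdisj fun k =>
    ((measurable_rankBelow k).comp hX (measurableSet_singleton m)).nullMeasurableSet,
    tsum_fintype]

theorem measure_rankBelow_eq_inv_card [IsProbabilityMeasure μ] (hX : Measurable X)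
    (hexch : ∀ σ : Equiv.Perm ι, μ.map (fun ω => X ω ∘ σ) = μ.map X)
    (hinj : ∀ᵐ ω ∂μ, Injective (X ω)) {m : ℕ} (hm : m < Fintype.card ι) (k : ι) :
    μ {ω | rankBelow (X ω) k = m} = (Fintype.card ι : ENNReal)⁻¹ := by
  classical
  have hall : ∀ j, μ {ω | rankBelow (X ω) j = m} = μ {ω | rankBelow (X ω) k = m} := fun j => by
    simpa using measure_rankBelow_perm_eq hX (hexch (Equiv.swap j k)) k m
  have hsum := sum_measure_rankBelow_eq_one hX hinj hm
  rw [Finset.sum_congr rfl fun j _ => hall j, sum_const, card_univ, nsmul_eq_mul,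
    mul_comm] at hsum
  exact ENNReal.eq_inv_of_mul_eq_one_left hsum

end Exchangeable

theorem rank_uniform_of_exchangeable_general
    {Ω : Type*} [MeasureSpace Ω] [IsProbabilityMeasure (ℙ : Measure Ω)]
    (n : ℕ)
    (s : Fin (n + 1) → Ω → ℝ) (hmeas : ∀ i, Measurable (s i))
    (hexch : ∀ σ : Equiv.Perm (Fin (n + 1)),
      Measure.map (fun ω i => s (σ i) ω) ℙ = Measure.map (fun ω i => s i ω) ℙ)
    (hdistinct : ℙ {ω | ∃ i j : Fin (n + 1), i ≠ j ∧ s i ω = s j ω} = 0) :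
    ∀ r : ℕ, 1 ≤ r → r ≤ n + 1 →
      ℙ {ω | 1 + (Finset.univ.filter
          (fun i : Fin n => s i.castSucc ω < s (Fin.last n) ω)).card = r}
        = (1 : ENNReal) / (n + 1) := by
  intro r hr1 hr2
  let X : Ω → Fin (n + 1) → ℝ := fun ω i => s i ω
  have hinj : ∀ᵐ ω, Injective (X ω) := ae_iff.2 <| measure_mono_null (fun ω hω => by
    obtain ⟨i, j, hij, hne⟩ := not_injective_iff.1 hω
    exact ⟨i, j, hne, hij⟩) hdistinct
  have hevent : {ω | 1 + #{i : Fin n | s i.castSucc ω < s (Fin.last n) ω} = r}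
      = {ω | rankBelow (X ω) (Fin.last n) = r - 1} := by
    ext ω
    simp only [Set.mem_ofPred_eq, rankBelow_last, X]
    omega
  rw [hevent, measure_rankBelow_eq_inv_card (measurable_pi_lambda _ hmeas) hexch hinj
    (by rw [Fintype.card_fin]; omega), Fintype.card_fin, one_div, Nat.cast_succ]

/-- If exchangeable scores `s_1, …, s_{n+1}` are almost surely distinct, then the rank
`1 + #{i ≤ n : s_i < s_{n+1}}` of `s_{n+1}` among the `n+1` scores is uniformly
distributed on `{1, …, n+1}`. -/
theorem rank_uniform_of_exchangeable
    {Ω : Type*} [MeasureSpace Ω] [IsProbabilityMeasure (ℙ : Measure Ω)]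
    (n : ℕ) (hn : 0 < n)
    (s : Fin (n + 1) → Ω → ℝ) (hmeas : ∀ i, Measurable (s i))
    (hexch : ∀ σ : Equiv.Perm (Fin (n + 1)),
      Measure.map (fun ω i => s (σ i) ω) ℙ = Measure.map (fun ω i => s i ω) ℙ)
    (hdistinct : ℙ {ω | ∃ i j : Fin (n + 1), i ≠ j ∧ s i ω = s j ω} = 0) :
    ∀ r : ℕ, 1 ≤ r → r ≤ n + 1 →
      ℙ {ω | 1 + (Finset.univ.filter
          (fun i : Fin n => s i.castSucc ω < s (Fin.last n) ω)).card = r}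
        = (1 : ENNReal) / (n + 1) :=
  rank_uniform_of_exchangeable_general n s hmeas hexch hdistinct
end
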